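/- Let R = ℤ[w,z]/(w² - 2w, wz - 2w) and for an ideal I of R containing some power of w and some power of z, define k(I) = min{k ≥ 0 : ∃x ∈ I, wx = 2^k·w}. Then k(z·I) = k(I) + 1. -/

import Mathlib

/-!
The augmentation `R → ℤ`, `w, z ↦ 2`, satisfies `w * x = augmentation x • w`, and `ℤ • w` is
torsion-free because `w ↦ 2`. Hence `w * x = 2 ^ k * w` says exactly `augmentation x = 2 ^ k`,
and since `augmentation (z * y) = 2 * augmentation y`, the exponents attained on `z · I` are
those attained on `I`, shifted by one; `0` is never attained on `z · I` because `2 ∤ 1`.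
-/

open MvPolynomial

noncomputable def SWFIdeal : Ideal (MvPolynomial (Fin 2) ℤ) :=
  Ideal.span {(X 0 : MvPolynomial (Fin 2) ℤ) ^ 2 - 2 * X 0,
    (X 0 : MvPolynomial (Fin 2) ℤ) * X 1 - 2 * X 0}

abbrev SWFRing : Type := MvPolynomial (Fin 2) ℤ ⧸ SWFIdeal

noncomputable def w : SWFRing := Ideal.Quotient.mk SWFIdeal (X 0)
noncomputable def z : SWFRing := Ideal.Quotient.mk SWFIdeal (X 1)

/-- `k(I) = min {k ≥ 0 : ∃ x ∈ I, wx = 2^k·w}`. -/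
noncomputable def kIdeal (I : Ideal SWFRing) : ℕ :=
  sInf {k : ℕ | ∃ x ∈ I, w * x = 2 ^ k * w}

namespace SWFRing

lemma w_mul_w : w * w = 2 * w := by
  have h : (X 0 : MvPolynomial (Fin 2) ℤ) ^ 2 - 2 * X 0 ∈ SWFIdeal :=
    Ideal.subset_span (Set.mem_insert _ _)
  rw [← Ideal.Quotient.eq_zero_iff_mem, map_sub, sub_eq_zero] at h
  simpa [w, pow_two, map_ofNat] using h

lemma w_mul_z : w * z = 2 * w := by
  have h : (X 0 : MvPolynomial (Fin 2) ℤ) * X 1 - 2 * X 0 ∈ SWFIdeal :=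
    Ideal.subset_span (Set.mem_insert_of_mem _ rfl)
  rw [← Ideal.Quotient.eq_zero_iff_mem, map_sub, sub_eq_zero] at h
  simpa [w, z, map_ofNat] using h

noncomputable def augmentation : SWFRing →+* ℤ :=
  Ideal.Quotient.lift SWFIdeal (eval fun _ => 2) fun p hp => by
    refine Submodule.span_induction ?_ (by simp) (fun _ _ _ _ hx hy => by simp [hx, hy])
      (fun _ _ _ hx => by simp [hx]) hp
    rintro p (rfl | rfl) <;> simp

@[simp] lemma augmentation_w : augmentation w = 2 := by simp [augmentation, w]

@[simp] lemma augmentation_z : augmentation z = 2 := by simp [augmentation, z]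

lemma w_mul_eq_augmentation_mul_w (x : SWFRing) : w * x = augmentation x * w := by
  obtain ⟨p, rfl⟩ := Ideal.Quotient.mk_surjective x
  induction p using MvPolynomial.induction_on with
  | C a => simp [augmentation, mul_comm]
  | add p q hp hq => simp only [map_add, mul_add, hp, hq, Int.cast_add, add_mul]
  | mul_X p i hp =>
    have hXi : w * Ideal.Quotient.mk SWFIdeal (X i) = 2 * w := by
      fin_cases i
      exacts [w_mul_w, w_mul_z]
    have hXi' : augmentation (Ideal.Quotient.mk SWFIdeal (X i)) = 2 := by simp [augmentation]
    rw [map_mul, map_mul, hXi', ← mul_assoc, hp, mul_assoc, hXi]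
    push_cast
    ring

lemma w_mul_eq_two_pow_mul_w_iff {x : SWFRing} {k : ℕ} :
    w * x = 2 ^ k * w ↔ augmentation x = 2 ^ k := by
  rw [w_mul_eq_augmentation_mul_w]
  refine ⟨fun h => ?_, fun h => by rw [h]; push_cast; rfl⟩
  have h2 := congrArg augmentation h
  simp only [map_mul, map_intCast, augmentation_w, map_pow, map_ofNat, Int.cast_id] at h2
  omega

lemma kIdeal_eq_sInf_augmentation (I : Ideal SWFRing) :
    kIdeal I = sInf {k : ℕ | ∃ x ∈ I, augmentation x = 2 ^ k} := by
  simp only [kIdeal, w_mul_eq_two_pow_mul_w_iff]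

lemma exists_mem_span_z_mul_augmentation_eq_iff {I : Ideal SWFRing} {n : ℤ} :
    (∃ x ∈ Ideal.span {z} * I, augmentation x = n) ↔ ∃ y ∈ I, 2 * augmentation y = n := by
  simp only [Ideal.mem_span_singleton_mul]
  constructor
  · rintro ⟨_, ⟨y, hy, rfl⟩, h⟩
    exact ⟨y, hy, by simpa using h⟩
  · rintro ⟨y, hy, h⟩
    exact ⟨z * y, ⟨y, hy, rfl⟩, by simpa using h⟩

end SWFRing

open SWFRing in
theorem stmt_8_general (I : Ideal SWFRing) (hw : ∃ a : ℕ, w ^ a ∈ I) :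
    kIdeal (Ideal.span {z} * I) = kIdeal I + 1 := by
  obtain ⟨a, ha⟩ := hw
  have hshift (k : ℕ) : (∃ x ∈ Ideal.span {z} * I, augmentation x = 2 ^ (k + 1)) ↔
      ∃ x ∈ I, augmentation x = 2 ^ k := by
    rw [exists_mem_span_z_mul_augmentation_eq_iff, pow_succ']
    simp only [mul_right_inj' (two_ne_zero' ℤ)]
  have hzero : ¬ ∃ x ∈ Ideal.span {z} * I, augmentation x = 2 ^ 0 := by
    rw [exists_mem_span_z_mul_augmentation_eq_iff]
    rintro ⟨y, -, h⟩
    omega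
  have hpos : 1 ≤ sInf {k : ℕ | ∃ x ∈ Ideal.span {z} * I, augmentation x = 2 ^ k} := by
    refine Nat.one_le_iff_ne_zero.mpr fun h => ?_
    rcases Nat.sInf_eq_zero.mp h with h0 | hempty
    · exact hzero h0
    · exact hempty.subset ((hshift a).mpr ⟨w ^ a, ha, by simp⟩)
  rw [kIdeal_eq_sInf_augmentation, kIdeal_eq_sInf_augmentation, ← Nat.sInf_add hpos]
  simp only [hshift]

/-- If `I` contains some power of `w` and some power of `z`, then `k(z·I) = k(I) + 1`. -/
theorem stmt_8 (I : Ideal SWFRing) (hw : ∃ a : ℕ, w ^ a ∈ I) (hz : ∃ b : ℕ, z ^ b ∈ I) :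
    kIdeal (Ideal.span {z} * I) = kIdeal I + 1 :=
  stmt_8_general I hw
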